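/- The annealed statistical pressure at finite size N admits the Gaussian-linearized representation A^A_N(β) = (1/N) E_h log E_{x,y,w} ∏_{i=1}^N Σ_{s∈Ω} exp[ s²( −βD + (βJ/√(2N)) w + √(βK/N) y ) + s( β h_i + √(βJ₀/N) x ) ], where x, y, w are independent standard Gaussian random variables, independent of the fields h. -/

import Mathlib

open MeasureTheory ProbabilityTheory Filter Real

noncomputable section

/-- Spin values for spin `S = M/2`: `Ω = {-1 + γ/S : γ = 0,…,2S} = {-1 + 2γ/M : γ = 0,…,M}`. -/
def spinVal (M : ℕ) (γ : Fin (M + 1)) : ℝ := -1 + 2 * (γ : ℝ) / (M : ℝ)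

/-- Standard Gaussian measure `N(0,1)` on ℝ. -/
def stdG : Measure ℝ := gaussianReal 0 1

instance : IsProbabilityMeasure stdG :=
  inferInstanceAs (IsProbabilityMeasure (gaussianReal 0 1))

/-- Law of the i.i.d. standard Gaussian couplings `(z i j)`. -/
def gaussMat (N : ℕ) : Measure (Fin N → Fin N → ℝ) :=
  Measure.pi fun _ => Measure.pi fun _ => stdG

/-- Law of an i.i.d. standard Gaussian vector `(z i)`. -/
def gaussVec (N : ℕ) : Measure (Fin N → ℝ) := Measure.pi fun _ => stdG

/-- Law of the i.i.d. random external fields, with single-site law `P`. -/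
def fieldMeasure (P : Measure ℝ) (N : ℕ) : Measure (Fin N → ℝ) := Measure.pi fun _ => P

/-- The unified inverse-freezing Hamiltonian
`H_N(s|z,h) = −(J/√(2N)) Σ_{i,j} z_{ij} s_i s_j − (J₀/(2N)) Σ_{i,j} s_i s_j + D Σ_i s_i²
  − Σ_i h_i s_i − (K/(2N)) Σ_{i,j} s_i² s_j²`. -/
def hamiltonian (M N : ℕ) (J J₀ D K : ℝ)
    (z : Fin N → Fin N → ℝ) (h : Fin N → ℝ) (s : Fin N → Fin (M + 1)) : ℝ :=
  - (J / Real.sqrt (2 * (N : ℝ))) *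
      ∑ i, ∑ j, z i j * spinVal M (s i) * spinVal M (s j)
  - (J₀ / (2 * (N : ℝ))) * ∑ i, ∑ j, spinVal M (s i) * spinVal M (s j)
  + D * ∑ i, (spinVal M (s i)) ^ 2
  - ∑ i, h i * spinVal M (s i)
  - (K / (2 * (N : ℝ))) * ∑ i, ∑ j, (spinVal M (s i)) ^ 2 * (spinVal M (s j)) ^ 2

/-- Partition function `Z_N(β|z,h)`. -/
def partitionFn (M N : ℕ) (β J J₀ D K : ℝ)
    (z : Fin N → Fin N → ℝ) (h : Fin N → ℝ) : ℝ :=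
  ∑ s : Fin N → Fin (M + 1), Real.exp (-(β * hamiltonian M N J J₀ D K z h s))

/-- Quenched statistical pressure `A^Q_N(β) = (1/N) E_{h} E_{z} log Z_N(β|z,h)`. -/
def quenchedPressure (M N : ℕ) (β J J₀ D K : ℝ) (P : Measure ℝ) : ℝ :=
  (1 / (N : ℝ)) * ∫ h, ∫ z, Real.log (partitionFn M N β J J₀ D K z h)
      ∂(gaussMat N) ∂(fieldMeasure P N)

/-- Annealed statistical pressure `A^A_N(β) = (1/N) E_h log E_z Z_N(β|z,h)`. -/
def annealedPressure (M N : ℕ) (β J J₀ D K : ℝ) (P : Measure ℝ) : ℝ :=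
  (1 / (N : ℝ)) * ∫ h, Real.log (∫ z, partitionFn M N β J J₀ D K z h ∂(gaussMat N))
      ∂(fieldMeasure P N)

/-!
Everything is a finite sum over spin configurations `s` of exponentials that are affine in
independent standard Gaussians, so each Gaussian integral is the moment generating function
`E e^{tX} = e^{t²/2}`. With `q(s) = Σ sᵢ²` and `l(s) = Σ sᵢ`, integrating out the couplings
`z_{ij}` gives `Σ_s exp(-β H_N(s|0,h) + β²J² q(s)² / (4N))`. Expanding the product over sites
and integrating out `w`, `y`, `x` produces the quadratic terms `β²J² q(s)² / (4N)`,
`βK q(s)² / (2N)` and `βJ₀ l(s)² / (2N)`; the last two are the non-random couplings of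
`-β H_N(s|0,h)`, so the two sums agree configuration by configuration.
-/

open Finset

section Gaussian

variable {ι κ : Type*} [Fintype ι]

lemma integral_exp_mul_stdG (t : ℝ) : ∫ x, exp (t * x) ∂stdG = exp (t ^ 2 / 2) := by
  simpa [mgf, stdG] using congrFun (mgf_id_gaussianReal (μ := 0) (v := 1)) t

lemma integrable_exp_mul_stdG (t : ℝ) : Integrable (fun x => exp (t * x)) stdG :=
  integrable_exp_mul_gaussianReal t

lemma integral_sum_exp_add_mul_stdG (a c : ι → ℝ) :
    ∫ u, ∑ s, exp (a s + c s * u) ∂stdG = ∑ s, exp (a s + c s ^ 2 / 2) := by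
  simp_rw [exp_add]
  rw [integral_finsetSum _ fun s _ => (integrable_exp_mul_stdG (c s)).const_mul _]
  simp_rw [integral_const_mul, integral_exp_mul_stdG]

lemma integral_integral_integral_sum_exp_stdG (a b c d : ι → ℝ) :
    ∫ x, ∫ y, ∫ w, ∑ s, exp (a s + b s * x + c s * y + d s * w) ∂stdG ∂stdG ∂stdG
      = ∑ s, exp (a s + b s ^ 2 / 2 + c s ^ 2 / 2 + d s ^ 2 / 2) := by
  have hw (x y : ℝ) : ∫ w, ∑ s, exp (a s + b s * x + c s * y + d s * w) ∂stdG
      = ∑ s, exp ((a s + d s ^ 2 / 2 + b s * x) + c s * y) := by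
    rw [integral_sum_exp_add_mul_stdG (fun s => a s + b s * x + c s * y)]
    exact sum_congr rfl fun s _ => congrArg exp (by ring)
  have hy (x : ℝ) : ∫ y, ∑ s, exp ((a s + d s ^ 2 / 2 + b s * x) + c s * y) ∂stdG
      = ∑ s, exp ((a s + d s ^ 2 / 2 + c s ^ 2 / 2) + b s * x) := by
    rw [integral_sum_exp_add_mul_stdG (fun s => a s + d s ^ 2 / 2 + b s * x)]
    exact sum_congr rfl fun s _ => congrArg exp (by ring)
  simp_rw [hw, hy]
  rw [integral_sum_exp_add_mul_stdG]
  exact sum_congr rfl fun s _ => congrArg exp (by ring)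

lemma integral_exp_sum_pi {E : ι → Type*} [∀ i, MeasurableSpace (E i)]
    (μ : ∀ i, Measure (E i)) [∀ i, SigmaFinite (μ i)] (f : ∀ i, E i → ℝ) :
    ∫ x, exp (∑ i, f i (x i)) ∂Measure.pi μ = ∏ i, ∫ y, exp (f i y) ∂μ i := by
  simp_rw [exp_sum]
  exact integral_fintype_prod_eq_prod (fun i y => exp (f i y))

lemma integrable_exp_sum_pi {E : ι → Type*} [∀ i, MeasurableSpace (E i)]
    {μ : ∀ i, Measure (E i)} [∀ i, SigmaFinite (μ i)] {f : ∀ i, E i → ℝ}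
    (hf : ∀ i, Integrable (fun y => exp (f i y)) (μ i)) :
    Integrable (fun x : ∀ i, E i => exp (∑ i, f i (x i))) (Measure.pi μ) := by
  simp_rw [exp_sum]
  exact Integrable.fintype_prod_dep hf

lemma integral_exp_sum_mul_pi_stdG (a : ι → ℝ) :
    ∫ v, exp (∑ i, a i * v i) ∂Measure.pi (fun _ : ι => stdG) = exp (∑ i, a i ^ 2 / 2) := by
  rw [integral_exp_sum_pi, exp_sum]
  simp_rw [integral_exp_mul_stdG]

lemma integrable_exp_sum_mul_pi_stdG (a : ι → ℝ) :
    Integrable (fun v : ι → ℝ => exp (∑ i, a i * v i)) (Measure.pi fun _ => stdG) :=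
  integrable_exp_sum_pi fun i => integrable_exp_mul_stdG (a i)

lemma prod_sum_exp_eq_sum_exp_sum [DecidableEq ι] [Fintype κ] (f : ι → κ → ℝ) :
    ∏ i, ∑ k, exp (f i k) = ∑ s : ι → κ, exp (∑ i, f i (s i)) := by
  rw [Fintype.prod_sum]
  simp_rw [exp_sum]

lemma integral_linearized_prod_sum_exp [DecidableEq ι] [Fintype κ]
    (σ : κ → ℝ) (a c₁ c₂ c₃ : ℝ) (b : ι → ℝ) :
    ∫ x, ∫ y, ∫ w, ∏ i, ∑ k,
        exp (σ k ^ 2 * (a + c₁ * w + c₂ * y) + σ k * (b i + c₃ * x)) ∂stdG ∂stdG ∂stdG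
      = ∑ s : ι → κ, exp (a * ∑ i, σ (s i) ^ 2 + ∑ i, b i * σ (s i)
          + (c₃ * ∑ i, σ (s i)) ^ 2 / 2 + (c₂ * ∑ i, σ (s i) ^ 2) ^ 2 / 2
          + (c₁ * ∑ i, σ (s i) ^ 2) ^ 2 / 2) := by
  have hexponent (s : ι → κ) (x y w : ℝ) :
      ∑ i, (σ (s i) ^ 2 * (a + c₁ * w + c₂ * y) + σ (s i) * (b i + c₃ * x))
        = (a * ∑ i, σ (s i) ^ 2 + ∑ i, b i * σ (s i)) + (c₃ * ∑ i, σ (s i)) * x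
          + (c₂ * ∑ i, σ (s i) ^ 2) * y + (c₁ * ∑ i, σ (s i) ^ 2) * w := by
    simp only [mul_sum, sum_mul, ← sum_add_distrib]
    exact sum_congr rfl fun i _ => by ring
  simp_rw [prod_sum_exp_eq_sum_exp_sum, hexponent]
  exact integral_integral_integral_sum_exp_stdG _ _ _ _

end Gaussian

lemma integral_exp_double_sum_mul_gaussMat {N : ℕ} (a : Fin N → Fin N → ℝ) :
    ∫ z, exp (∑ i, ∑ j, a i j * z i j) ∂gaussMat N = exp (∑ i, ∑ j, a i j ^ 2 / 2) := by
  rw [gaussMat, integral_exp_sum_pi (fun _ => Measure.pi fun _ => stdG)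
    fun i (v : Fin N → ℝ) => ∑ j, a i j * v j, exp_sum]
  simp_rw [integral_exp_sum_mul_pi_stdG]

lemma integrable_exp_double_sum_mul_gaussMat {N : ℕ} (a : Fin N → Fin N → ℝ) :
    Integrable (fun z => exp (∑ i, ∑ j, a i j * z i j)) (gaussMat N) :=
  integrable_exp_sum_pi fun i => integrable_exp_sum_mul_pi_stdG (a i)

lemma neg_mul_hamiltonian (M N : ℕ) (β J J₀ D K : ℝ) (z : Fin N → Fin N → ℝ) (h : Fin N → ℝ)
    (s : Fin N → Fin (M + 1)) :
    -(β * hamiltonian M N J J₀ D K z h s)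
      = -(β * hamiltonian M N J J₀ D K 0 h s)
        + ∑ i, ∑ j, β * J / √(2 * N) * (spinVal M (s i) * spinVal M (s j)) * z i j := by
  have hcoupling : ∑ i, ∑ j, β * J / √(2 * N) * (spinVal M (s i) * spinVal M (s j)) * z i j
      = β * (J / √(2 * N)) * ∑ i, ∑ j, z i j * spinVal M (s i) * spinVal M (s j) := by
    simp only [mul_sum]
    exact sum_congr rfl fun i _ => sum_congr rfl fun j _ => by ring
  rw [hcoupling]
  simp only [hamiltonian, Pi.zero_apply, zero_mul, sum_const_zero]
  ring

lemma integral_partitionFn_gaussMat (M N : ℕ) (β J J₀ D K : ℝ) (h : Fin N → ℝ) :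
    ∫ z, partitionFn M N β J J₀ D K z h ∂gaussMat N
      = ∑ s, exp (-(β * hamiltonian M N J J₀ D K 0 h s)
          + (β * J / √(2 * N) * ∑ i, spinVal M (s i) ^ 2) ^ 2 / 2) := by
  have hsplit : (fun z => partitionFn M N β J J₀ D K z h) = fun z => ∑ s,
      exp (-(β * hamiltonian M N J J₀ D K 0 h s))
        * exp (∑ i, ∑ j, β * J / √(2 * N) * (spinVal M (s i) * spinVal M (s j)) * z i j) := by
    funext z
    exact sum_congr rfl fun s _ => by rw [neg_mul_hamiltonian, exp_add]
  rw [hsplit, integral_finsetSum _ fun s _ =>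
    (integrable_exp_double_sum_mul_gaussMat _).const_mul _]
  refine sum_congr rfl fun s _ => ?_
  rw [integral_const_mul, integral_exp_double_sum_mul_gaussMat, ← exp_add]
  congr 2
  rw [mul_pow, sq (∑ i, _), sum_mul_sum, mul_sum, sum_div]
  refine sum_congr rfl fun i _ => ?_
  rw [mul_sum, sum_div]
  exact sum_congr rfl fun j _ => by ring

theorem annealed_gaussian_linearization_general
    (M N : ℕ)
    (β J J₀ D K : ℝ) (hβ : 0 < β) (hJ₀ : 0 ≤ J₀) (hK : 0 ≤ K)
    (P : Measure ℝ) :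
    annealedPressure M N β J J₀ D K P
      = (1 / (N : ℝ)) * ∫ h, Real.log (∫ x, ∫ y, ∫ w,
          ∏ i : Fin N, ∑ γ : Fin (M + 1),
            Real.exp ((spinVal M γ) ^ 2 *
                (-(β * D) + (β * J / Real.sqrt (2 * (N : ℝ))) * w
                  + Real.sqrt (β * K / (N : ℝ)) * y)
              + spinVal M γ * (β * h i + Real.sqrt (β * J₀ / (N : ℝ)) * x))
          ∂stdG ∂stdG ∂stdG) ∂(fieldMeasure P N) := by
  rw [annealedPressure]
  congr 2
  funext h
  rw [integral_partitionFn_gaussMat, integral_linearized_prod_sum_exp]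
  refine congrArg log (sum_congr rfl fun s _ => congrArg exp ?_)
  have hK' : √(β * K / N) ^ 2 = β * K / N := sq_sqrt (by positivity)
  have hJ₀' : √(β * J₀ / N) ^ 2 = β * J₀ / N := sq_sqrt (by positivity)
  simp only [mul_pow, hK', hJ₀', mul_assoc β, ← mul_sum, hamiltonian, Pi.zero_apply, zero_mul,
    sum_const_zero, sq (∑ i, _), sum_mul_sum]
  ring

/-- the annealed statistical pressure at finite size `N` admits the
Gaussian-linearized representation with three auxiliary independent standard Gaussians
`x, y, w` (independent of the fields `h`). -/
theorem annealed_gaussian_linearization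
    (M N : ℕ) (hM : 1 ≤ M) (hN : 0 < N)
    (β J J₀ D K : ℝ) (hβ : 0 < β) (hJ : 0 ≤ J) (hJ₀ : 0 ≤ J₀) (hK : 0 ≤ K)
    (P : Measure ℝ) [IsProbabilityMeasure P]
    (hP : ∀ t : ℝ, Integrable (fun x => Real.exp (t * x)) P) :
    annealedPressure M N β J J₀ D K P
      = (1 / (N : ℝ)) * ∫ h, Real.log (∫ x, ∫ y, ∫ w,
          ∏ i : Fin N, ∑ γ : Fin (M + 1),
            Real.exp ((spinVal M γ) ^ 2 *
                (-(β * D) + (β * J / Real.sqrt (2 * (N : ℝ))) * w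
                  + Real.sqrt (β * K / (N : ℝ)) * y)
              + spinVal M γ * (β * h i + Real.sqrt (β * J₀ / (N : ℝ)) * x))
          ∂stdG ∂stdG ∂stdG) ∂(fieldMeasure P N) :=
  annealed_gaussian_linearization_general M N β J J₀ D K hβ hJ₀ hK P
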